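/- Let v, w be words over a finite alphabet A such that v respects the transition to w, v is not a suffix of w, and w is not a prefix of v. Then for every word u′ and every m ≤ |O_w(u′)|, the number of pairs (u, S) with S an m-element subset of O_v(u) and u′ = R_u^{v→w}(S) is at most the binomial coefficient C(|O_w(u′)|, m). -/

import Mathlib

/-- `v` occurs in `u` at position `i`, i.e. `u_{[i, i+|v|)} = v`. -/
def occursAt {A : Type*} (v u : List A) (i : ℕ) : Prop :=
  (u.drop i).take v.length = v

/-- `O_v(u)`: the set of positions at which `v` occurs in `u`. -/
def occSet {A : Type*} (v u : List A) : Set ℕ := {i | occursAt v u i}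

/-- `O_v(u)` viewed as a subset of `ℤ`. -/
def occSetZ {A : Type*} (v u : List A) : Set ℤ :=
  {i | ∃ k : ℕ, (k : ℤ) = i ∧ occursAt v u k}

/-- `R_u^{v→w}(i)`: replace the occurrence of `v` at position `i` in `u` by `w`. -/
def replaceAt {A : Type*} (v w u : List A) (i : ℕ) : List A :=
  u.take i ++ w ++ u.drop (i + v.length)

/-- Sequential replacement of `v` by `w` at a list of positions (given in the coordinates
of the original word; after each replacement the remaining positions shift by `|w| - |v|`):
`u¹ = u`, `u^{r+1} = R_{uʳ}^{v→w}(s_r + (r-1)(|w|-|v|))`. -/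
def seqReplace {A : Type*} (v w : List A) : List A → List ℤ → List A
  | u, [] => u
  | u, s :: rest =>
      seqReplace v w (replaceAt v w u s.toNat)
        (rest.map (· + ((w.length : ℤ) - (v.length : ℤ))))
  termination_by _ l => l.length
  decreasing_by simp [List.length_map]

/-- `R_u^{v→w}(S)`: replace `v` by `w` at all positions of `S`, from left to right. -/
def replaceSet {A : Type*} (v w u : List A) (S : Finset ℕ) : List A :=
  seqReplace v w u ((S.sort (· ≤ ·)).map (fun k : ℕ => (k : ℤ)))

/-- `v` respects the transition to `w` (conditions (i)-(iv)). -/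
def Respects {A : Type*} (v w : List A) : Prop :=
  ∀ u : List A, ∀ i ∈ occSet v u,
    (∀ j ∈ occSet v u, i < j →
      ((j : ℤ) + (w.length : ℤ) - (v.length : ℤ)) ∈ occSetZ v (replaceAt v w u i)) ∧
    (∀ j ∈ occSet v u, j < i → j ∈ occSet v (replaceAt v w u i)) ∧
    (∀ j ∈ occSet w u, j < i → j ∈ occSet w (replaceAt v w u i)) ∧
    (∀ j ∈ occSet v u, i < j → (i : ℤ) < (j : ℤ) + (w.length : ℤ) - (v.length : ℤ))

/-!
Send a pair `(u, S)` to the set of positions of the `m` copies of `w` that the replacements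
insert into `u' = R_u^{v→w}(S)`. With `S = {s_0 < ⋯ < s_{m-1}}`, conditions (i) and (iv) show
that the `r`-th copy lands at `s_r + r(|w| - |v|)` and that these positions increase strictly,
while by (iii) a later replacement, made further right, never destroys an earlier copy; so the
positions form an `m`-subset of `O_w(u')`. The map is injective: undoing the replacements from
right to left recovers `u` from `u'` and the positions, and the positions determine the `s_r`.
-/

section Words

variable {A : Type*}

theorem occursAt.add_length_le {v u : List A} {i : ℕ} (hv : v ≠ []) (h : occursAt v u i) :
    i + v.length ≤ u.length := by
  have hlen := congrArg List.length h
  simp only [List.length_take, List.length_drop] at hlen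
  have : v.length ≠ 0 := by simpa using hv
  omega

theorem occursAt.eq_append {v u : List A} {i : ℕ} (h : occursAt v u i) :
    u = u.take i ++ v ++ u.drop (i + v.length) := by
  conv_lhs => rw [← List.take_append_drop i u, ← List.take_append_drop v.length (u.drop i), h]
  simp [List.drop_drop]

theorem replaceAt_append {v w x y z : List A} (hz : z.length = v.length) :
    replaceAt v w (x ++ z ++ y) x.length = x ++ w ++ y := by
  simp [replaceAt, ← hz]

theorem occursAt_replaceAt (v : List A) {w u : List A} {i : ℕ} (hi : i ≤ u.length) :
    occursAt w (replaceAt v w u i) i := by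
  simp [occursAt, replaceAt, List.length_take, Nat.min_eq_left hi]

theorem replaceAt_replaceAt_of_occursAt {v w u : List A} {i : ℕ} (h : occursAt v u i)
    (hi : i ≤ u.length) : replaceAt w v (replaceAt v w u i) i = u := by
  obtain ⟨x, y, rfl, rfl⟩ : ∃ x y, u = x ++ v ++ y ∧ x.length = i :=
    ⟨_, _, h.eq_append, by simp [hi]⟩
  rw [replaceAt_append rfl, replaceAt_append rfl]

theorem occSetZ_eq_image (v u : List A) : occSetZ v u = Nat.cast '' occSet v u := by
  ext i
  simp [occSetZ, occSet, and_comm]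

theorem ncard_occSetZ (v u : List A) : (occSetZ v u).ncard = (occSet v u).ncard := by
  rw [occSetZ_eq_image, Set.ncard_image_of_injective _ Nat.cast_injective]

theorem occSet_finite {v : List A} (hv : v ≠ []) (u : List A) : (occSet v u).Finite :=
  (Set.finite_Iio u.length).subset fun i hi => by
    have := occursAt.add_length_le hv hi
    have := List.length_pos_iff.mpr hv
    simp only [Set.mem_Iio]
    omega

end Words

theorem Set.ncard_le_choose_of_injOn {α β : Type*} {P : Set α} {T : Set β} (hT : T.Finite)
    (m : ℕ) (f : α → Finset β) (hf : ∀ p ∈ P, ↑(f p) ⊆ T ∧ (f p).card = m) (hinj : P.InjOn f) :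
    P.ncard ≤ T.ncard.choose m :=
  calc P.ncard ≤ (↑(hT.toFinset.powersetCard m) : Set (Finset β)).ncard :=
        Set.ncard_le_ncard_of_injOn f (fun p hp => by simpa using hf p hp) hinj
    _ = T.ncard.choose m := by
        rw [Set.ncard_coe_finset, Finset.card_powersetCard, Set.ncard_eq_toFinset_card _ hT]

/-- For `d = |w| - |v|`: where the copies of `w` end up when `v` is replaced, left to right, at the
positions `L = [s_0 < s_1 < …]`, each replacement shifting the later ones by `d`. -/
def insertedPositions (d : ℤ) (L : List ℤ) : List ℤ :=
  L.mapIdx fun r s => s + r * d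

theorem insertedPositions_cons (d s : ℤ) (L : List ℤ) :
    insertedPositions d (s :: L) = s :: insertedPositions d (L.map (· + d)) := by
  simp only [insertedPositions, List.mapIdx_cons, Nat.cast_zero, zero_mul, add_zero,
    List.cons.injEq, true_and]
  apply List.ext_getElem (by simp)
  intro r _ _
  simp only [List.getElem_mapIdx, List.getElem_map]
  push_cast
  ring

theorem insertedPositions_injective (d : ℤ) : Function.Injective (insertedPositions d) := by
  intro L₁ L₂ h
  have hlen : L₁.length = L₂.length := by simpa [insertedPositions] using congrArg List.length h
  refine List.ext_getElem hlen fun r h₁ h₂ => ?_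
  simpa [insertedPositions, h₁, h₂] using congrArg (·[r]?) h

section Replacement

variable {A : Type*} {v w : List A}

local notation "δ" => ((w.length : ℤ) - (v.length : ℤ))

theorem seqReplace_cons (u : List A) (s : ℤ) (L : List ℤ) :
    seqReplace v w u (s :: L) = seqReplace v w (replaceAt v w u s.toNat) (L.map (· + δ)) := by
  rw [seqReplace]

def SortedOccs (v u : List A) (L : List ℤ) : Prop :=
  L.Pairwise (· < ·) ∧ ∀ s ∈ L, s ∈ occSetZ v u

theorem sortedOccs_sort {u : List A} {S : Finset ℕ} (hS : ↑S ⊆ occSet v u) :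
    SortedOccs v u ((S.sort (· ≤ ·)).map Nat.cast) := by
  refine ⟨List.pairwise_map.mpr ((S.sortedLT_sort).pairwise.imp Int.ofNat_lt.mpr), ?_⟩
  simp only [List.mem_map, Finset.mem_sort]
  rintro _ ⟨k, hk, rfl⟩
  exact ⟨k, rfl, hS hk⟩

theorem Respects.shift_mem_occSetZ (hresp : Respects v w) {u : List A} {k : ℕ}
    (hk : occursAt v u k) {s : ℤ} (hs : s ∈ occSetZ v u) (hks : (k : ℤ) < s) :
    s + δ ∈ occSetZ v (replaceAt v w u k) ∧ (k : ℤ) < s + δ := by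
  obtain ⟨j, rfl, hj⟩ := hs
  obtain ⟨hshift, -, -, hlt⟩ := hresp u k hk
  exact ⟨by simpa only [add_sub_assoc] using hshift j hj (by omega),
    by simpa only [add_sub_assoc] using hlt j hj (by omega)⟩

@[elab_as_elim]
theorem Respects.sortedOccs_induction (hresp : Respects v w) {motive : List A → List ℤ → Prop}
    (nil : ∀ u, motive u [])
    (cons : ∀ u (k : ℕ) L, occursAt v u k → SortedOccs v (replaceAt v w u k) (L.map (· + δ)) →
      (∀ s ∈ L.map (· + δ), (k : ℤ) < s) → motive (replaceAt v w u k) (L.map (· + δ)) →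
      motive u (k :: L)) :
    ∀ u L, SortedOccs v u L → motive u L
  | u, [], _ => nil u
  | u, s :: L, ⟨hsort, hocc⟩ => by
    obtain ⟨k, rfl, hk⟩ := hocc s List.mem_cons_self
    rw [List.pairwise_cons] at hsort
    have hstep (s) (hs : s ∈ L) := hresp.shift_mem_occSetZ hk (hocc s (List.mem_cons_of_mem _ hs))
      (hsort.1 s hs)
    have htail : SortedOccs v (replaceAt v w u k) (L.map (· + δ)) :=
      ⟨List.pairwise_map.mpr (hsort.2.imp fun h => by omega),
        by simpa using fun s hs => (hstep s hs).1⟩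
    exact cons u k L hk htail (by simpa using fun s hs => (hstep s hs).2)
      (hresp.sortedOccs_induction nil cons _ _ htail)
termination_by _ L => L.length

theorem Respects.occursAt_seqReplace_of_lt (hresp : Respects v w) {u : List A} {L : List ℤ}
    (hL : SortedOccs v u L) :
    ∀ q : ℕ, (∀ s ∈ L, (q : ℤ) < s) → occursAt w u q → occursAt w (seqReplace v w u L) q := by
  refine hresp.sortedOccs_induction (fun u q _ hw => by simpa [seqReplace] using hw) ?_ u L hL
  intro u k L hk _ hlt ih q hq hw
  have hqk : q < k := by exact_mod_cast hq k List.mem_cons_self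
  rw [seqReplace_cons, Int.toNat_natCast]
  exact ih q (fun s hs => (Int.ofNat_lt.mpr hqk).trans (hlt s hs)) ((hresp u k hk).2.2.1 q hw hqk)

theorem Respects.lt_of_mem_insertedPositions (hresp : Respects v w) {u : List A} {L : List ℤ}
    (hL : SortedOccs v u L) : ∀ c : ℤ, (∀ s ∈ L, c < s) → ∀ t ∈ insertedPositions δ L, c < t := by
  refine hresp.sortedOccs_induction (fun u c _ => by simp [insertedPositions]) ?_ u L hL
  intro u k L _ _ hlt ih c hc t ht
  rw [insertedPositions_cons, List.mem_cons] at ht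
  rcases ht with rfl | ht
  · exact hc _ List.mem_cons_self
  · exact ih c (fun s hs => (hc k List.mem_cons_self).trans (hlt s hs)) t ht

theorem Respects.pairwise_insertedPositions (hresp : Respects v w) {u : List A} {L : List ℤ}
    (hL : SortedOccs v u L) : (insertedPositions δ L).Pairwise (· < ·) := by
  refine hresp.sortedOccs_induction (fun u => by simp [insertedPositions]) ?_ u L hL
  intro u k L _ htail hlt ih
  rw [insertedPositions_cons, List.pairwise_cons]
  exact ⟨hresp.lt_of_mem_insertedPositions htail k hlt, ih⟩

theorem Respects.mem_occSetZ_seqReplace (hresp : Respects v w) (hv : v ≠ []) {u : List A}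
    {L : List ℤ} (hL : SortedOccs v u L) :
    ∀ t ∈ insertedPositions δ L, t ∈ occSetZ w (seqReplace v w u L) := by
  refine hresp.sortedOccs_induction (fun u => by simp [insertedPositions]) ?_ u L hL
  intro u k L hk htail hlt ih t ht
  rw [insertedPositions_cons, List.mem_cons] at ht
  rw [seqReplace_cons, Int.toNat_natCast]
  rcases ht with rfl | ht
  · have hku : k ≤ u.length := le_of_add_le_left (hk.add_length_le hv)
    exact ⟨k, rfl, hresp.occursAt_seqReplace_of_lt htail k hlt (occursAt_replaceAt v hku)⟩
  · exact ih t ht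

theorem Respects.foldr_replaceAt_insertedPositions (hresp : Respects v w) (hv : v ≠ [])
    {u : List A} {L : List ℤ} (hL : SortedOccs v u L) :
    (insertedPositions δ L).foldr (fun t x => replaceAt w v x t.toNat) (seqReplace v w u L) = u := by
  refine hresp.sortedOccs_induction (fun u => by simp [insertedPositions, seqReplace]) ?_ u L hL
  intro u k L hk _ _ ih
  rw [insertedPositions_cons, List.foldr_cons, seqReplace_cons, Int.toNat_natCast, ih]
  exact replaceAt_replaceAt_of_occursAt hk (le_of_add_le_left (hk.add_length_le hv))

variable (v w) in
def replacedPositions (S : Finset ℕ) : List ℤ :=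
  insertedPositions δ ((S.sort (· ≤ ·)).map Nat.cast)

theorem Respects.eq_of_replaceSet_eq (hresp : Respects v w) (hv : v ≠ []) {u₁ u₂ : List A}
    {S₁ S₂ : Finset ℕ} (hS₁ : ↑S₁ ⊆ occSet v u₁) (hS₂ : ↑S₂ ⊆ occSet v u₂)
    (h : replaceSet v w u₁ S₁ = replaceSet v w u₂ S₂)
    (hpos : (replacedPositions v w S₁).toFinset = (replacedPositions v w S₂).toFinset) :
    u₁ = u₂ ∧ S₁ = S₂ := by
  have hL₁ := sortedOccs_sort hS₁
  have hL₂ := sortedOccs_sort hS₂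
  have hpos : replacedPositions v w S₁ = replacedPositions v w S₂ :=
    (hresp.pairwise_insertedPositions hL₁).eq_of_mem_iff (hresp.pairwise_insertedPositions hL₂)
      (by simpa [Finset.ext_iff, replacedPositions] using hpos)
  have hS : S₁ = S₂ := by
    have := congrArg List.toFinset <|
      List.map_injective_iff.mpr Nat.cast_injective (insertedPositions_injective _ hpos)
    rwa [Finset.sort_toFinset, Finset.sort_toFinset] at this
  subst hS
  refine ⟨?_, rfl⟩
  rw [← hresp.foldr_replaceAt_insertedPositions hv hL₁,
    ← hresp.foldr_replaceAt_insertedPositions hv hL₂]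
  exact congrArg (fun u' => List.foldr _ u' _) h

end Replacement

theorem statement9_general {A : Type*} (v w : List A)
    (hresp : Respects v w) (hsuf : ¬ v <:+ w) (hpre : ¬ w <+: v)
    (u' : List A) (m : ℕ) :
    {p : List A × Finset ℕ | ↑p.2 ⊆ occSet v p.1 ∧ p.2.card = m ∧
        replaceSet v w p.1 p.2 = u'}.ncard ≤ Nat.choose (occSet w u').ncard m := by
  have hv : v ≠ [] := by rintro rfl; exact hsuf List.nil_suffix
  have hw : w ≠ [] := by rintro rfl; exact hpre List.nil_prefix
  rw [← ncard_occSetZ]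
  refine Set.ncard_le_choose_of_injOn (occSetZ_eq_image w u' ▸ (occSet_finite hw u').image _) m
    (fun p => (replacedPositions v w p.2).toFinset) ?_ ?_
  · rintro ⟨u, S⟩ ⟨hS, rfl, rfl⟩
    have hL := sortedOccs_sort hS
    refine ⟨fun t ht => hresp.mem_occSetZ_seqReplace hv hL t (List.mem_toFinset.mp ht), ?_⟩
    have hnodup : (replacedPositions v w S).Nodup := (hresp.pairwise_insertedPositions hL).nodup
    rw [List.toFinset_card_of_nodup hnodup]
    simp [replacedPositions, insertedPositions]
  · rintro ⟨u₁, S₁⟩ ⟨hS₁, -, h₁⟩ ⟨u₂, S₂⟩ ⟨hS₂, -, h₂⟩ hpos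
    obtain ⟨rfl, rfl⟩ := hresp.eq_of_replaceSet_eq hv hS₁ hS₂ (h₁.trans h₂.symm) hpos
    rfl

/-- Lemma (preimage): if `v` respects the transition to `w`, `v` is not a suffix of `w`,
and `w` is not a prefix of `v`, then for any `u'` and `m ≤ |O_w(u')|`, the number of pairs
`(u, S)` with `S ⊆ O_v(u)`, `|S| = m`, and `u' = R_u^{v→w}(S)` is at most `C(|O_w(u')|, m)`. -/
theorem statement9 {A : Type*} [Fintype A] (v w : List A)
    (hresp : Respects v w) (hsuf : ¬ v <:+ w) (hpre : ¬ w <+: v)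
    (u' : List A) (m : ℕ) (hm : m ≤ (occSet w u').ncard) :
    {p : List A × Finset ℕ | ↑p.2 ⊆ occSet v p.1 ∧ p.2.card = m ∧
        replaceSet v w p.1 p.2 = u'}.ncard ≤ Nat.choose (occSet w u').ncard m :=
  statement9_general v w hresp hsuf hpre u' m
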